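/- Let K be a multiplicative valued difference field with a splitting t^• of the valuation, residue field k, and scaling exponent ρ. For Laurent difference polynomials f, g over K and w ∈ Γ^n, in_w(fg) = in_w(f)·in_w(g). -/

import Mathlib

open scoped Classical

/-- A multiplicative valued difference field:  a field `K` with a (additively written)
valuation `v : K → ℝ` with value group `Γ ⊆ ℝ` (with the convention `v 0 = 0`, membership in
the valuation ring `O_K` being `0 ≤ v x`), an automorphism `σ` satisfying
`v (σ x) = ρ · v x` for the scaling exponent `ρ > 0`, together with its difference residue
field `(k, σk)` given by the residue map `res : K → k` (meaningful on `O_K`). -/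
structure MVDF (K k : Type) [Field K] [Field k] where
  v : K → ℝ
  σ : K ≃+* K
  σk : k ≃+* k
  ρ : ℝ
  Γ : AddSubgroup ℝ
  res : K → k
  hρ : 0 < ρ
  hv0 : v 0 = 0
  hΓ : ∀ x : K, x ≠ 0 → v x ∈ Γ
  hsurj : ∀ γ ∈ Γ, ∃ x : K, x ≠ 0 ∧ v x = γ
  hmul : ∀ a b : K, a ≠ 0 → b ≠ 0 → v (a * b) = v a + v b
  hadd : ∀ a b : K, a ≠ 0 → b ≠ 0 → a + b ≠ 0 → min (v a) (v b) ≤ v (a + b)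
  hσv : ∀ a : K, a ≠ 0 → v (σ a) = ρ * v a
  hres0 : res 0 = 0
  hres1 : res 1 = 1
  hresadd : ∀ a b : K, 0 ≤ v a → 0 ≤ v b → res (a + b) = res a + res b
  hresmul : ∀ a b : K, 0 ≤ v a → 0 ≤ v b → res (a * b) = res a * res b
  hreszero : ∀ a : K, a ≠ 0 → 0 ≤ v a → (res a = 0 ↔ 0 < v a)
  hressurj : ∀ y : k, ∃ x : K, 0 ≤ v x ∧ res x = y
  hresσ : ∀ a : K, 0 ≤ v a → res (σ a) = σk (res a)

/-- The real number `u(ρ)·w` for an exponent `e ∈ (ℤ[σ])^n`, encoded as a finitely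
supported function on `Fin n × ℕ`:  substituting `ρ` for `σ` and pairing with `w`. -/
noncomputable def expDot {n : ℕ} (ρ : ℝ) (e : (Fin n × ℕ) →₀ ℤ) (w : Fin n → ℝ) : ℝ :=
  e.sum fun p m => (m : ℝ) * ρ ^ p.2 * w p.1

section Aux

variable {K k : Type} [Field K] [Field k] {n : ℕ}

lemma MVDF.t_ne_zero (S : MVDF K k) (t : ℝ → K) (ht1 : t 0 = 1)
    (htv : ∀ γ ∈ S.Γ, S.v (t γ) = γ) {γ : ℝ} (hγ : γ ∈ S.Γ) : t γ ≠ 0 := by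
  intro h
  have h2 := htv γ hγ
  rw [h, S.hv0] at h2
  rw [← h2, ht1] at h
  exact one_ne_zero h

lemma expDot_add (ρ : ℝ) (a b : (Fin n × ℕ) →₀ ℤ) (w : Fin n → ℝ) :
    expDot ρ (a + b) w = expDot ρ a w + expDot ρ b w := by
  unfold expDot
  exact Finsupp.sum_add_index' (fun p => by simp) (fun p m1 m2 => by push_cast; ring)

lemma MVDF.mul_rho_mem (S : MVDF K k) {γ : ℝ} (hγ : γ ∈ S.Γ) : S.ρ * γ ∈ S.Γ := by
  obtain ⟨x, hx, hvx⟩ := S.hsurj γ hγ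
  have hσx : S.σ x ≠ 0 := fun h => hx (S.σ.injective (by rw [h, map_zero]))
  have h := S.hσv x hx
  rw [hvx] at h
  rw [← h]
  exact S.hΓ _ hσx

lemma MVDF.pow_rho_mem (S : MVDF K k) (j : ℕ) {γ : ℝ} (hγ : γ ∈ S.Γ) : S.ρ ^ j * γ ∈ S.Γ := by
  induction j with
  | zero => simpa using hγ
  | succ j ih =>
      have h : S.ρ ^ (j + 1) * γ = S.ρ * (S.ρ ^ j * γ) := by ring
      rw [h]
      exact S.mul_rho_mem ih

lemma expDot_mem (S : MVDF K k) (w : Fin n → ℝ) (hw : ∀ i, w i ∈ S.Γ)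
    (e : (Fin n × ℕ) →₀ ℤ) : expDot S.ρ e w ∈ S.Γ := by
  rw [expDot, Finsupp.sum]
  apply AddSubgroup.sum_mem
  intro p _
  have h1 : S.ρ ^ p.2 * w p.1 ∈ S.Γ := S.pow_rho_mem p.2 (hw p.1)
  have h2 := AddSubgroup.zsmul_mem S.Γ h1 (e p)
  rwa [zsmul_eq_mul, ← mul_assoc] at h2

lemma MVDF.v_mul_t (S : MVDF K k) (t : ℝ → K) (ht1 : t 0 = 1)
    (htv : ∀ γ ∈ S.Γ, S.v (t γ) = γ) {c : ℝ} (hc : c ∈ S.Γ) {x : K} (hx : x ≠ 0) :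
    S.v (x * t (-c)) = S.v x - c := by
  rw [S.hmul x _ hx (S.t_ne_zero t ht1 htv (neg_mem hc)), htv _ (neg_mem hc)]
  ring

lemma MVDF.vr_nonneg (S : MVDF K k) (t : ℝ → K) (ht1 : t 0 = 1)
    (htv : ∀ γ ∈ S.Γ, S.v (t γ) = γ) {c : ℝ} (hc : c ∈ S.Γ) {x : K}
    (hx : x = 0 ∨ c ≤ S.v x) : 0 ≤ S.v (x * t (-c)) := by
  rcases hx with h | h
  · rw [h, zero_mul, S.hv0]
  · by_cases h0 : x = 0
    · rw [h0, zero_mul, S.hv0]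
    · rw [S.v_mul_t t ht1 htv hc h0]; linarith

lemma MVDF.r_mul (S : MVDF K k) (t : ℝ → K) (ht1 : t 0 = 1)
    (htadd : ∀ γ δ : ℝ, γ ∈ S.Γ → δ ∈ S.Γ → t (γ + δ) = t γ * t δ)
    (htv : ∀ γ ∈ S.Γ, S.v (t γ) = γ) {c d : ℝ} (hc : c ∈ S.Γ) (hd : d ∈ S.Γ)
    {x y : K} (hx : x ≠ 0) (hy : y ≠ 0) (hxc : c ≤ S.v x) (hyd : d ≤ S.v y) :
    S.res (x * t (-c)) * S.res (y * t (-d)) = S.res (x * y * t (-(c + d))) := by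
  rw [← S.hresmul _ _ (S.vr_nonneg t ht1 htv hc (Or.inr hxc))
        (S.vr_nonneg t ht1 htv hd (Or.inr hyd))]
  congr 1
  rw [neg_add, htadd _ _ (neg_mem hc) (neg_mem hd)]
  ring

lemma MVDF.r_zero_of_lt (S : MVDF K k) (t : ℝ → K) (ht1 : t 0 = 1)
    (htv : ∀ γ ∈ S.Γ, S.v (t γ) = γ) {c : ℝ} (hc : c ∈ S.Γ) {x : K}
    (hx : x ≠ 0) (hlt : c < S.v x) : S.res (x * t (-c)) = 0 := by
  have hne : x * t (-c) ≠ 0 := mul_ne_zero hx (S.t_ne_zero t ht1 htv (neg_mem hc))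
  have hv := S.v_mul_t t ht1 htv hc hx
  rw [S.hreszero _ hne (by rw [hv]; linarith), hv]
  linarith

lemma MVDF.r_ne_zero (S : MVDF K k) (t : ℝ → K) (ht1 : t 0 = 1)
    (htv : ∀ γ ∈ S.Γ, S.v (t γ) = γ) {x : K} (hx : x ≠ 0) :
    S.res (x * t (-(S.v x))) ≠ 0 := by
  have hc : S.v x ∈ S.Γ := S.hΓ x hx
  have hne : x * t (-(S.v x)) ≠ 0 := mul_ne_zero hx (S.t_ne_zero t ht1 htv (neg_mem hc))
  have hv : S.v (x * t (-(S.v x))) = 0 := by rw [S.v_mul_t t ht1 htv hc hx]; ring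
  rw [ne_eq, S.hreszero _ hne (le_of_eq hv.symm), hv]
  simp

lemma MVDF.sum_key {α : Type*} (S : MVDF K k) (t : ℝ → K) (ht1 : t 0 = 1)
    (htv : ∀ γ ∈ S.Γ, S.v (t γ) = γ) {c : ℝ} (hc : c ∈ S.Γ)
    (s : Finset α) (f : α → K) (h : ∀ i ∈ s, f i = 0 ∨ c ≤ S.v (f i)) :
    ((∑ i ∈ s, f i) = 0 ∨ c ≤ S.v (∑ i ∈ s, f i)) ∧
      S.res ((∑ i ∈ s, f i) * t (-c)) = ∑ i ∈ s, S.res (f i * t (-c)) := by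
  induction s using Finset.cons_induction with
  | empty => simp [S.hv0, S.hres0]
  | cons a s ha ih =>
      have ha' : f a = 0 ∨ c ≤ S.v (f a) := h a (Finset.mem_cons_self a s)
      have hs : ∀ i ∈ s, f i = 0 ∨ c ≤ S.v (f i) :=
        fun i hi => h i (Finset.mem_cons_of_mem hi)
      obtain ⟨ih1, ih2⟩ := ih hs
      rw [Finset.sum_cons, Finset.sum_cons]
      have part1 : f a + ∑ i ∈ s, f i = 0 ∨ c ≤ S.v (f a + ∑ i ∈ s, f i) := by
        by_cases hfa : f a = 0
        · rw [hfa, zero_add]; exact ih1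
        rcases ih1 with hB0 | hvB
        · rw [hB0, add_zero]; exact Or.inr (ha'.resolve_left hfa)
        by_cases hsum : f a + ∑ i ∈ s, f i = 0
        · exact Or.inl hsum
        · by_cases hB : (∑ i ∈ s, f i) = 0
          · rw [hB, add_zero]; exact Or.inr (ha'.resolve_left hfa)
          · refine Or.inr (le_trans (le_min (ha'.resolve_left hfa) hvB) ?_)
            exact S.hadd _ _ hfa hB hsum
      refine ⟨part1, ?_⟩
      have hdistr : (f a + ∑ i ∈ s, f i) * t (-c) = f a * t (-c) + (∑ i ∈ s, f i) * t (-c) := by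
        ring
      rw [hdistr, S.hresadd _ _ (S.vr_nonneg t ht1 htv hc ha') (S.vr_nonneg t ht1 htv hc ih1),
        ih2]

lemma mul_apply_superset {R M : Type*} [Semiring R] [AddCommGroup M]
    (f g : AddMonoidAlgebra R M) {s : Finset M} (hs : f.coeff.support ⊆ s) (e : M) :
    (f * g).coeff e = ∑ a ∈ s, f.coeff a * g.coeff (e - a) := by
  classical
  rw [AddMonoidAlgebra.coeff_mul]
  have inner : ∀ (a₁ : M) (b₁ : R),
      (Finsupp.sum g.coeff fun a₂ b₂ => if a₁ + a₂ = e then b₁ * b₂ else 0) = b₁ * g.coeff (e - a₁) := by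
    intro a₁ b₁
    rw [Finsupp.sum]
    have hcond : ∀ a₂ : M, (a₁ + a₂ = e) ↔ (a₂ = e - a₁) := fun a₂ => eq_sub_iff_add_eq'.symm
    simp only [hcond]
    rw [Finset.sum_ite_eq' g.coeff.support (e - a₁) (fun a₂ => b₁ * g.coeff a₂)]
    by_cases hmem : e - a₁ ∈ g.coeff.support
    · rw [if_pos hmem]
    · rw [if_neg hmem, Finsupp.notMem_support_iff.mp hmem, mul_zero]
  rw [Finsupp.sum]
  calc ∑ a ∈ f.coeff.support, (Finsupp.sum g.coeff fun a₂ b₂ => if a + a₂ = e then f.coeff a * b₂ else 0)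
      = ∑ a ∈ f.coeff.support, f.coeff a * g.coeff (e - a) :=
        Finset.sum_congr rfl fun a _ => inner a (f.coeff a)
    _ = ∑ a ∈ s, f.coeff a * g.coeff (e - a) :=
        Finset.sum_subset hs fun x _ hnx => by
          rw [Finsupp.notMem_support_iff.mp hnx, zero_mul]

end Aux

/-- Tropicalization of a Laurent difference polynomial evaluated at `w`:
`min (v c_u + u(ρ)·w)` over the support (junk value `0` for the zero polynomial). -/
noncomputable def trop {K : Type} [Field K] {n : ℕ} (v : K → ℝ) (ρ : ℝ)
    (F : ((Fin n × ℕ) →₀ ℤ) →₀ K) (w : Fin n → ℝ) : ℝ :=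
  if h : F.support.Nonempty then F.support.inf' h fun e => v (F e) + expDot ρ e w else 0

/-- The initial form `in_w f` of a Laurent difference polynomial at `w`:  the sum, over the
exponents attaining the minimum in `trop f w`, of `res (c_u · t^{-v c_u}) · x^{u(σ̄)}`,
a Laurent difference polynomial over the residue field.  Here `t : ℝ → K` is a splitting
of the valuation. -/
noncomputable def initialForm {K k : Type} [Field K] [Field k] {n : ℕ}
    (S : MVDF K k) (t : ℝ → K)
    (F : ((Fin n × ℕ) →₀ ℤ) →₀ K) (w : Fin n → ℝ) :
    AddMonoidAlgebra k ((Fin n × ℕ) →₀ ℤ) :=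
  ∑ e ∈ F.support.filter (fun e => S.v (F e) + expDot S.ρ e w = trop S.v S.ρ F w),
    AddMonoidAlgebra.single e (S.res (F e * t (-(S.v (F e)))))

section Aux2

variable {K k : Type} [Field K] [Field k] {n : ℕ}

lemma trop_le (v : K → ℝ) (ρ : ℝ) (F : ((Fin n × ℕ) →₀ ℤ) →₀ K) (w : Fin n → ℝ)
    {e : (Fin n × ℕ) →₀ ℤ} (he : F e ≠ 0) :
    trop v ρ F w ≤ v (F e) + expDot ρ e w := by
  have hne : F.support.Nonempty := ⟨e, Finsupp.mem_support_iff.mpr he⟩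
  rw [trop, dif_pos hne]
  exact Finset.inf'_le _ (Finsupp.mem_support_iff.mpr he)

lemma trop_attained (v : K → ℝ) (ρ : ℝ) {F : ((Fin n × ℕ) →₀ ℤ) →₀ K} (w : Fin n → ℝ)
    (hF : F ≠ 0) : ∃ e, F e ≠ 0 ∧ v (F e) + expDot ρ e w = trop v ρ F w := by
  have hne : F.support.Nonempty := Finsupp.support_nonempty_iff.mpr hF
  rw [trop, dif_pos hne]
  obtain ⟨i, hi, h⟩ := Finset.exists_mem_eq_inf' hne (fun e => v (F e) + expDot ρ e w)
  exact ⟨i, Finsupp.mem_support_iff.mp hi, h.symm⟩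

lemma initialForm_apply (S : MVDF K k) (t : ℝ → K) (F : ((Fin n × ℕ) →₀ ℤ) →₀ K)
    (w : Fin n → ℝ) (e : (Fin n × ℕ) →₀ ℤ) :
    (initialForm S t F w).coeff e =
      if F e ≠ 0 ∧ S.v (F e) + expDot S.ρ e w = trop S.v S.ρ F w
      then S.res (F e * t (-(S.v (F e)))) else 0 := by
  rw [initialForm, AddMonoidAlgebra.coeff_sum, Finset.sum_apply']
  simp only [AddMonoidAlgebra.coeff_single, Finsupp.single_apply]
  rw [Finset.sum_ite_eq'
    (F.support.filter (fun e => S.v (F e) + expDot S.ρ e w = trop S.v S.ρ F w)) e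
    (fun a => S.res (F a * t (-(S.v (F a)))))]
  simp only [Finset.mem_filter, Finsupp.mem_support_iff]

lemma initialForm_zero (S : MVDF K k) (t : ℝ → K) (w : Fin n → ℝ) :
    initialForm S t (0 : ((Fin n × ℕ) →₀ ℤ) →₀ K) w = 0 := by
  simp [initialForm]

end Aux2

/-- Let `K` be a multiplicative valued difference field with a splitting `t` of
the valuation, residue field `k`, and scaling exponent `ρ`.  For Laurent difference
polynomials `f, g` over `K` and `w ∈ Γ^n`, `in_w (fg) = in_w f · in_w g`. -/
theorem initialForm_mul
    {K k : Type} [Field K] [Field k] {n : ℕ} (S : MVDF K k)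
    (t : ℝ → K)
    (ht1 : t 0 = 1)
    (htadd : ∀ γ δ : ℝ, γ ∈ S.Γ → δ ∈ S.Γ → t (γ + δ) = t γ * t δ)
    (htv : ∀ γ ∈ S.Γ, S.v (t γ) = γ)
    (htσ : ∀ γ ∈ S.Γ, S.σ (t γ) = t (S.ρ * γ))
    (F G : AddMonoidAlgebra K ((Fin n × ℕ) →₀ ℤ))
    (w : Fin n → ℝ) (hw : ∀ i, w i ∈ S.Γ) :
    initialForm S t (F * G).coeff w = initialForm S t F.coeff w * initialForm S t G.coeff w := by
  classical
  by_cases hF : F = 0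
  · rw [hF, zero_mul, AddMonoidAlgebra.coeff_zero, initialForm_zero, zero_mul]
  by_cases hG : G = 0
  · rw [hG, mul_zero, AddMonoidAlgebra.coeff_zero, initialForm_zero, mul_zero]
  set m := trop S.v S.ρ F.coeff w with hm
  set m' := trop S.v S.ρ G.coeff w with hm'
  obtain ⟨a0, ha0, ha0m⟩ := trop_attained S.v S.ρ w (fun h => hF (AddMonoidAlgebra.coeff_injective h))
  obtain ⟨b0, hb0, hb0m⟩ := trop_attained S.v S.ρ w (fun h => hG (AddMonoidAlgebra.coeff_injective h))
  have hH : (F * G).coeff ≠ 0 := fun h => mul_ne_zero hF hG (AddMonoidAlgebra.coeff_injective h)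
  have hmΓ : m ∈ S.Γ := by
    rw [hm, ← ha0m]; exact add_mem (S.hΓ _ ha0) (expDot_mem S w hw _)
  have hm'Γ : m' ∈ S.Γ := by
    rw [hm', ← hb0m]; exact add_mem (S.hΓ _ hb0) (expDot_mem S w hw _)
  have hcΓ : ∀ e : (Fin n × ℕ) →₀ ℤ, m + m' - expDot S.ρ e w ∈ S.Γ :=
    fun e => sub_mem (add_mem hmΓ hm'Γ) (expDot_mem S w hw e)
  have hedw : ∀ (e a : (Fin n × ℕ) →₀ ℤ),
      expDot S.ρ a w + expDot S.ρ (e - a) w = expDot S.ρ e w := by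
    intro e a
    rw [← expDot_add, add_sub_cancel]
  have hterm0 : ∀ (e : (Fin n × ℕ) →₀ ℤ), ∀ a ∈ F.coeff.support,
      F.coeff a * G.coeff (e - a) = 0 ∨ m + m' - expDot S.ρ e w ≤ S.v (F.coeff a * G.coeff (e - a)) := by
    intro e a ha
    have hFa : F.coeff a ≠ 0 := Finsupp.mem_support_iff.mp ha
    by_cases hGb : G.coeff (e - a) = 0
    · exact Or.inl (by rw [hGb, mul_zero])
    · right
      rw [S.hmul _ _ hFa hGb]
      have h1 := trop_le S.v S.ρ F.coeff w hFa
      have h2 := trop_le S.v S.ρ G.coeff w hGb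
      have h3 := hedw e a
      rw [← hm] at h1; rw [← hm'] at h2
      linarith
  have claimA : ∀ e : (Fin n × ℕ) →₀ ℤ,
      (initialForm S t F.coeff w * initialForm S t G.coeff w).coeff e
        = S.res ((F * G).coeff e * t (-(m + m' - expDot S.ρ e w))) := by
    intro e
    have hsup : (initialForm S t F.coeff w).coeff.support ⊆ F.coeff.support := by
      intro a ha
      rw [Finsupp.mem_support_iff] at ha
      rw [Finsupp.mem_support_iff]
      intro h0
      apply ha
      rw [initialForm_apply, if_neg]
      rintro ⟨h1, -⟩
      exact h1 h0
    rw [mul_apply_superset _ _ hsup e, mul_apply_superset F G (Finset.Subset.refl _) e,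
      (S.sum_key t ht1 htv (hcΓ e) F.coeff.support _ (hterm0 e)).2]
    refine Finset.sum_congr rfl fun a ha => ?_
    have hFa : F.coeff a ≠ 0 := Finsupp.mem_support_iff.mp ha
    rw [initialForm_apply, initialForm_apply]
    by_cases hGb : G.coeff (e - a) = 0
    · rw [hGb]
      simp [S.hres0]
    by_cases h1 : S.v (F.coeff a) + expDot S.ρ a w = m
    · by_cases h2 : S.v (G.coeff (e - a)) + expDot S.ρ (e - a) w = m'
      · rw [if_pos ⟨hFa, h1⟩, if_pos ⟨hGb, h2⟩,
          S.r_mul t ht1 htadd htv (S.hΓ _ hFa) (S.hΓ _ hGb) hFa hGb le_rfl le_rfl]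
        have h3 := hedw e a
        have h4 : S.v (F.coeff a) + S.v (G.coeff (e - a)) = m + m' - expDot S.ρ e w := by linarith
        rw [h4]
      · rw [if_pos ⟨hFa, h1⟩, if_neg (by rintro ⟨-, h⟩; exact h2 h), mul_zero]
        symm
        apply S.r_zero_of_lt t ht1 htv (hcΓ e) (mul_ne_zero hFa hGb)
        rw [S.hmul _ _ hFa hGb]
        have h2' : m' < S.v (G.coeff (e - a)) + expDot S.ρ (e - a) w :=
          lt_of_le_of_ne (hm' ▸ trop_le S.v S.ρ G.coeff w hGb) (Ne.symm h2)
        have h3 := hedw e a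
        linarith
    · rw [if_neg (by rintro ⟨-, h⟩; exact h1 h), zero_mul]
      symm
      apply S.r_zero_of_lt t ht1 htv (hcΓ e) (mul_ne_zero hFa hGb)
      rw [S.hmul _ _ hFa hGb]
      have h1' : m < S.v (F.coeff a) + expDot S.ρ a w :=
        lt_of_le_of_ne (hm ▸ trop_le S.v S.ρ F.coeff w hFa) (Ne.symm h1)
      have h2' : m' ≤ S.v (G.coeff (e - a)) + expDot S.ρ (e - a) w := hm' ▸ trop_le S.v S.ρ G.coeff w hGb
      have h3 := hedw e a
      linarith
  have hinF : initialForm S t F.coeff w ≠ 0 := by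
    intro h0
    have hco : (initialForm S t F.coeff w).coeff a0 ≠ 0 := by
      rw [initialForm_apply, if_pos ⟨ha0, ha0m⟩]
      exact S.r_ne_zero t ht1 htv ha0
    exact hco (by rw [h0]; rfl)
  have hinG : initialForm S t G.coeff w ≠ 0 := by
    intro h0
    have hco : (initialForm S t G.coeff w).coeff b0 ≠ 0 := by
      rw [initialForm_apply, if_pos ⟨hb0, hb0m⟩]
      exact S.r_ne_zero t ht1 htv hb0
    exact hco (by rw [h0]; rfl)
  have hP : initialForm S t F.coeff w * initialForm S t G.coeff w ≠ 0 := mul_ne_zero hinF hinG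
  have hlow : ∀ e : (Fin n × ℕ) →₀ ℤ, (F * G).coeff e ≠ 0 →
      m + m' - expDot S.ρ e w ≤ S.v ((F * G).coeff e) := by
    intro e he
    have h := (S.sum_key t ht1 htv (hcΓ e) F.coeff.support _ (hterm0 e)).1
    rw [← mul_apply_superset F G (Finset.Subset.refl _) e] at h
    exact h.resolve_left he
  obtain ⟨e1, he1, he1eq⟩ : ∃ e, (F * G).coeff e ≠ 0 ∧
      S.v ((F * G).coeff e) = m + m' - expDot S.ρ e w := by
    obtain ⟨e1, he1⟩ := Finsupp.ne_iff.mp (fun h => hP (AddMonoidAlgebra.coeff_injective h))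
    rw [AddMonoidAlgebra.coeff_zero, Finsupp.coe_zero, Pi.zero_apply, claimA e1] at he1
    refine ⟨e1, fun h0 => he1 (by rw [h0, zero_mul, S.hres0]), ?_⟩
    by_contra hne
    have hlt : m + m' - expDot S.ρ e1 w < S.v ((F * G).coeff e1) :=
      lt_of_le_of_ne (hlow e1 (fun h0 => he1 (by rw [h0, zero_mul, S.hres0]))) (Ne.symm hne)
    exact he1 (S.r_zero_of_lt t ht1 htv (hcΓ e1)
      (fun h0 => he1 (by rw [h0, zero_mul, S.hres0])) hlt)
  have htropH : trop S.v S.ρ (F * G).coeff w = m + m' := by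
    apply le_antisymm
    · have h := trop_le S.v S.ρ (F * G).coeff w he1
      rw [he1eq] at h
      linarith
    · rw [trop, dif_pos (Finsupp.support_nonempty_iff.mpr hH)]
      apply Finset.le_inf'
      intro e he
      have h := hlow e (Finsupp.mem_support_iff.mp he)
      linarith
  ext e
  rw [claimA e, initialForm_apply, htropH]
  by_cases h0 : (F * G).coeff e = 0
  · rw [if_neg (by rintro ⟨h, -⟩; exact h h0), h0, zero_mul, S.hres0]
  by_cases h1 : S.v ((F * G).coeff e) + expDot S.ρ e w = m + m'
  · rw [if_pos ⟨h0, h1⟩, show S.v ((F * G).coeff e) = m + m' - expDot S.ρ e w from by linarith]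
  · rw [if_neg (by rintro ⟨-, h⟩; exact h1 h)]
    symm
    exact S.r_zero_of_lt t ht1 htv (hcΓ e) h0
      (lt_of_le_of_ne (hlow e h0) (fun hx => h1 (by rw [← hx]; ring)))
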